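/- arXiv:2407.13360 — 2 statements merged into one kernel-verified Lean document; each statement's English description precedes it below -/
import Mathlib

section
/- The function x ↦ Q(−G√x) is monotonically increasing and concave on x ≥ 0 for any constant G > 0, where Q is the standard Gaussian tail function. -/
/-!
`Q' = -φ` with `φ` the Gaussian density, which increases on `(-∞, 0]`; so `Q` is decreasing
everywhere and concave on `(-∞, 0]`. Hence `y ↦ Q(-G y)` is increasing and concave on `[0, ∞)`,
and precomposing with the increasing concave `√` keeps both properties.
-/

open MeasureTheory

/-- The standard Gaussian tail function `Q(x) = (1/√(2π)) ∫ₓ^∞ e^{−t²/2} dt`. -/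
noncomputable def gaussianQ (x : ℝ) : ℝ :=
  (Real.sqrt (2 * Real.pi))⁻¹ * ∫ t in Set.Ioi x, Real.exp (-t ^ 2 / 2)

open Real Set

theorem hasDerivAt_integral_Ioi {f : ℝ → ℝ} {x : ℝ} (hf : Continuous f)
    (hx : IntegrableOn f (Ioi x)) : HasDerivAt (fun a => ∫ t in Ioi a, f t) (-f x) x := by
  have hsplit : (fun a => ∫ t in Ioi a, f t) = fun a => (∫ t in a..x, f t) + ∫ t in Ioi x, f t :=
    funext fun a =>
      (intervalIntegral.integral_interval_add_Ioi' (hf.intervalIntegrable a x) hx).symm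
  rw [hsplit]
  exact (intervalIntegral.integral_hasDerivAt_left (hf.intervalIntegrable x x)
    (hf.stronglyMeasurableAtFilter _ _) hf.continuousAt).add_const _

theorem integrable_exp_neg_sq_div_two : Integrable fun t : ℝ => exp (-t ^ 2 / 2) := by
  simpa [neg_div, div_eq_inv_mul] using integrable_exp_neg_mul_sq (b := 1 / 2) (by norm_num)

theorem hasDerivAt_gaussianQ (x : ℝ) :
    HasDerivAt gaussianQ (-((√(2 * π))⁻¹ * exp (-x ^ 2 / 2))) x := by
  rw [← mul_neg]
  exact (hasDerivAt_integral_Ioi (by fun_prop)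
    integrable_exp_neg_sq_div_two.integrableOn).const_mul _

theorem deriv_gaussianQ : deriv gaussianQ = fun x => -((√(2 * π))⁻¹ * exp (-x ^ 2 / 2)) :=
  funext fun x => (hasDerivAt_gaussianQ x).deriv

theorem differentiable_gaussianQ : Differentiable ℝ gaussianQ :=
  fun x => (hasDerivAt_gaussianQ x).differentiableAt

theorem antitone_gaussianQ : Antitone gaussianQ :=
  antitone_of_deriv_nonpos differentiable_gaussianQ fun x => by
    rw [deriv_gaussianQ]
    simp only [Left.neg_nonpos_iff]
    positivity

theorem concaveOn_gaussianQ_Iic : ConcaveOn ℝ (Iic 0) gaussianQ := by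
  refine AntitoneOn.concaveOn_of_deriv (convex_Iic 0)
    differentiable_gaussianQ.continuous.continuousOn differentiable_gaussianQ.differentiableOn ?_
  rw [interior_Iic, deriv_gaussianQ]
  intro a _ b hb hab
  have hsq : b ^ 2 ≤ a ^ 2 := by nlinarith [mem_Iio.1 hb]
  dsimp only
  gcongr

theorem ConcaveOn.comp_sqrt {F : ℝ → ℝ} (hF : ConcaveOn ℝ (Ici 0) F)
    (hmono : MonotoneOn F (Ici 0)) : ConcaveOn ℝ (Ici 0) (F ∘ Real.sqrt) := by
  have himage : Real.sqrt '' Ici 0 = Ici 0 :=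
    Subset.antisymm (image_subset_iff.2 fun x _ => sqrt_nonneg x)
      fun y hy => ⟨y ^ 2, sq_nonneg y, sqrt_sq hy⟩
  rw [← himage] at hF hmono
  exact hF.comp strictConcaveOn_sqrt.concaveOn hmono

/-- `x ↦ Q(−G√x)` is monotonically increasing and concave on `x ≥ 0` for any `G > 0`. -/
theorem Q_sqrt_mono_concave (G : ℝ) (hG : 0 < G) :
    MonotoneOn (fun x : ℝ => gaussianQ (-G * Real.sqrt x)) (Set.Ici 0) ∧
    ConcaveOn ℝ (Set.Ici 0) (fun x : ℝ => gaussianQ (-G * Real.sqrt x)) := by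
  have hmono : Monotone fun y => gaussianQ (-G * y) :=
    antitone_gaussianQ.comp fun a b hab => by nlinarith
  have hconc : ConcaveOn ℝ (Ici 0) fun y => gaussianQ (-G * y) := by
    refine (concaveOn_gaussianQ_Iic.comp_linearMap (LinearMap.mul ℝ ℝ (-G))).subset
      (fun y hy => ?_) (convex_Ici 0)
    simp only [mem_preimage, LinearMap.mul_apply', mem_Iic]
    nlinarith [mem_Ici.1 hy]
  exact ⟨(hmono.comp sqrt_monotone).monotoneOn _, hconc.comp_sqrt (hmono.monotoneOn _)⟩
end

section
/- The function ν(D) = (σ(ψ_I(D)) − (L−1)/L)·σ(ψ_T(D)) is log-concave on [1, D_max], where ψ_I is concave, ψ_T is concave, σ is the sigmoid, and σ(ψ_I(D)) > (L−1)/L holds for all D in [1, D_max]; hence any stationary point of ν in the interior of [1, D_max] is a global maximizer. -/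
/-- The sigmoid function. -/
noncomputable def sigmoid (x : ℝ) : ℝ := 1 / (1 + Real.exp (-x))

/-!
Write `c = (L-1)/L ≥ 0`. Since `σ x - c = ((1 - c) - c e^{-x}) σ x`, the function `log (σ x - c)`
is the sum of the log of a positive concave function and `log σ`, whose derivative `1 - σ` is
decreasing; it is therefore concave and increasing on the half-line `{c < σ}`, so composing it
with the concave `ψ_I` (and `log σ` with `ψ_T`) keeps concavity, and `log ν` is concave. A
critical point of `ν` is one of `log ν`, hence a maximum of the concave `log ν`.
-/

open Set

lemma sigmoid_eq_real_sigmoid : sigmoid = Real.sigmoid := by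
  ext x
  rw [sigmoid, Real.sigmoid_def, one_div]

theorem ConcaveOn.comp_of_mapsTo {𝕜 E α β : Type*} [Semiring 𝕜] [PartialOrder 𝕜]
    [AddCommMonoid E] [AddCommMonoid α] [PartialOrder α] [AddCommMonoid β] [PartialOrder β]
    [SMul 𝕜 E] [SMul 𝕜 α] [SMul 𝕜 β] {s : Set E} {t : Set β} {f : E → β} {g : β → α}
    (hg : ConcaveOn 𝕜 t g) (hg' : MonotoneOn g t) (hf : ConcaveOn 𝕜 s f) (hst : MapsTo f s t) :
    ConcaveOn 𝕜 s (g ∘ f) :=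
  ⟨hf.1, fun _ hx _ hy _ _ ha hb hab =>
    (hg.2 (hst hx) (hst hy) ha hb hab).trans <|
      hg' (hg.1 (hst hx) (hst hy) ha hb hab) (hst <| hf.1 hx hy ha hb hab) <|
        hf.2 hx hy ha hb hab⟩

lemma hasDerivAt_log_sigmoid (x : ℝ) :
    HasDerivAt (fun x => Real.log (Real.sigmoid x)) (1 - Real.sigmoid x) x := by
  convert (Real.hasDerivAt_sigmoid x).log (Real.sigmoid_pos x).ne' using 1
  field_simp [(Real.sigmoid_pos x).ne']

lemma concaveOn_log_sigmoid : ConcaveOn ℝ univ (fun x => Real.log (Real.sigmoid x)) := by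
  refine Antitone.concaveOn_univ_of_deriv (fun x => (hasDerivAt_log_sigmoid x).differentiableAt) ?_
  rw [funext fun x => (hasDerivAt_log_sigmoid x).deriv]
  exact fun x y hxy => sub_le_sub_left (Real.sigmoid_monotone hxy) 1

lemma sigmoid_sub_eq_mul_sigmoid (c x : ℝ) :
    Real.sigmoid x - c = (1 - c - c * Real.exp (-x)) * Real.sigmoid x := by
  rw [Real.sigmoid_def]
  field_simp
  ring

lemma concaveOn_one_sub_mul_exp_neg {c : ℝ} (hc : 0 ≤ c) :
    ConcaveOn ℝ univ (fun x => 1 - c - c * Real.exp (-x)) := by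
  have hexp : ConvexOn ℝ univ (fun x => Real.exp (-x)) :=
    convexOn_exp.comp_linearMap (-LinearMap.id)
  exact ((concaveOn_const (1 - c) convex_univ).add (hexp.smul hc).neg).congr fun x _ => by
    simp [sub_eq_add_neg]

lemma concaveOn_log_sigmoid_sub {c : ℝ} (hc : 0 ≤ c) :
    ConcaveOn ℝ {x | c < Real.sigmoid x} (fun x => Real.log (Real.sigmoid x - c)) := by
  have hconv : Convex ℝ {x | c < Real.sigmoid x} :=
    sep_univ ▸ (Real.sigmoid_monotone.monotoneOn univ).convex_gt convex_univ c
  have hpos : ∀ x ∈ {x | c < Real.sigmoid x}, 0 < 1 - c - c * Real.exp (-x) := fun x hx =>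
    pos_of_mul_pos_left ((sigmoid_sub_eq_mul_sigmoid c x) ▸ sub_pos.2 hx) (Real.sigmoid_pos x).le
  have hlog :
      ConcaveOn ℝ {x | c < Real.sigmoid x} (fun x => Real.log (1 - c - c * Real.exp (-x))) :=
    strictConcaveOn_log_Ioi.concaveOn.comp_of_mapsTo (fun a ha b _ hab => Real.log_le_log ha hab)
      ((concaveOn_one_sub_mul_exp_neg hc).subset (subset_univ _) hconv) hpos
  refine (hlog.add (concaveOn_log_sigmoid.subset (subset_univ _) hconv)).congr fun x hx => ?_
  rw [Pi.add_apply, sigmoid_sub_eq_mul_sigmoid c x,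
    Real.log_mul (hpos x hx).ne' (Real.sigmoid_pos x).ne']

theorem ConcaveOn.log_sigmoid_sub {s : Set ℝ} {ψ : ℝ → ℝ} {c : ℝ} (hψ : ConcaveOn ℝ s ψ)
    (hc : 0 ≤ c) (h : ∀ x ∈ s, c < Real.sigmoid (ψ x)) :
    ConcaveOn ℝ s (fun x => Real.log (Real.sigmoid (ψ x) - c)) :=
  (concaveOn_log_sigmoid_sub hc).comp_of_mapsTo
    (fun x hx _ _ hxy => Real.log_le_log (sub_pos.2 hx) (by gcongr)) hψ h

theorem ConcaveOn.isMaxOn_of_hasDerivAt_eq_zero {S : Set ℝ} {f : ℝ → ℝ} {x : ℝ}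
    (hf : ConcaveOn ℝ S f) (hx : x ∈ interior S) (hd : HasDerivAt f 0 x) : IsMaxOn f S x := by
  have hmin : IsMinOn (-f) S x := hf.neg.isMinOn_of_rightDeriv_eq_zero hx <| by
    rw [hd.neg.hasDerivWithinAt.derivWithin (uniqueDiffWithinAt_Ioi x), neg_zero]
  exact isMaxOn_iff.2 fun y hy => neg_le_neg_iff.mp (isMinOn_iff.1 hmin y hy)

theorem isMaxOn_of_concaveOn_log_of_hasDerivAt_eq_zero {S : Set ℝ} {f : ℝ → ℝ} {x : ℝ}
    (hpos : ∀ y ∈ S, 0 < f y) (hf : ConcaveOn ℝ S (fun y => Real.log (f y)))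
    (hx : x ∈ interior S) (hd : HasDerivAt f 0 x) : IsMaxOn f S x := by
  have hfx := hpos x (interior_subset hx)
  have hmax := hf.isMaxOn_of_hasDerivAt_eq_zero hx <| by simpa using hd.log hfx.ne'
  exact isMaxOn_iff.2 fun y hy => (Real.log_le_log_iff (hpos y hy) hfx).mp (isMaxOn_iff.1 hmax y hy)

theorem nu_logconcave_stationary_max_general (L : ℕ) (hL : 2 ≤ L) (Dmax : ℝ)
    (ψI ψT : ℝ → ℝ) (hψI : ConcaveOn ℝ (Set.Icc 1 Dmax) ψI)
    (hψT : ConcaveOn ℝ (Set.Icc 1 Dmax) ψT)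
    (hgt : ∀ D ∈ Set.Icc (1 : ℝ) Dmax, ((L : ℝ) - 1) / L < sigmoid (ψI D)) :
    let ν : ℝ → ℝ := fun D => (sigmoid (ψI D) - ((L : ℝ) - 1) / L) * sigmoid (ψT D)
    ConcaveOn ℝ (Set.Icc 1 Dmax) (fun D => Real.log (ν D)) ∧
    ∀ D₀ ∈ Set.Ioo (1 : ℝ) Dmax, DifferentiableAt ℝ ν D₀ → deriv ν D₀ = 0 →
      ∀ D ∈ Set.Icc (1 : ℝ) Dmax, ν D ≤ ν D₀ := by
  rw [sigmoid_eq_real_sigmoid] at hgt ⊢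
  intro ν
  have hc : 0 ≤ ((L : ℝ) - 1) / L := div_nonneg (by norm_num; omega) L.cast_nonneg
  have hpos : ∀ D ∈ Icc (1 : ℝ) Dmax, 0 < ν D := fun D hD =>
    mul_pos (sub_pos.2 (hgt D hD)) (Real.sigmoid_pos _)
  have hlog : ConcaveOn ℝ (Icc 1 Dmax) (fun D => Real.log (ν D)) := by
    refine ((hψI.log_sigmoid_sub hc hgt).add
      (hψT.log_sigmoid_sub le_rfl fun D _ => Real.sigmoid_pos _)).congr fun D hD => ?_
    simp only [Pi.add_apply, sub_zero, ν]
    rw [Real.log_mul (sub_pos.2 (hgt D hD)).ne' (Real.sigmoid_pos _).ne']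
  refine ⟨hlog, fun D₀ hD₀ hdiff hderiv => ?_⟩
  exact isMaxOn_of_concaveOn_log_of_hasDerivAt_eq_zero hpos hlog (by rwa [interior_Icc])
    (hderiv ▸ hdiff.hasDerivAt)

/-- `ν(D) = (σ(ψ_I(D)) − (L−1)/L)·σ(ψ_T(D))` is log-concave on `[1, D_max]` when
`ψ_I, ψ_T` are concave and `σ(ψ_I(D)) > (L−1)/L` there; hence any interior
stationary point of `ν` is a global maximizer on `[1, D_max]`. -/
theorem nu_logconcave_stationary_max (L : ℕ) (hL : 2 ≤ L) (Dmax : ℝ) (hD : 1 < Dmax)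
    (ψI ψT : ℝ → ℝ) (hψI : ConcaveOn ℝ (Set.Icc 1 Dmax) ψI)
    (hψT : ConcaveOn ℝ (Set.Icc 1 Dmax) ψT)
    (hgt : ∀ D ∈ Set.Icc (1 : ℝ) Dmax, ((L : ℝ) - 1) / L < sigmoid (ψI D)) :
    let ν : ℝ → ℝ := fun D => (sigmoid (ψI D) - ((L : ℝ) - 1) / L) * sigmoid (ψT D)
    ConcaveOn ℝ (Set.Icc 1 Dmax) (fun D => Real.log (ν D)) ∧
    ∀ D₀ ∈ Set.Ioo (1 : ℝ) Dmax, DifferentiableAt ℝ ν D₀ → deriv ν D₀ = 0 →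
      ∀ D ∈ Set.Icc (1 : ℝ) Dmax, ν D ≤ ν D₀ :=
  nu_logconcave_stationary_max_general L hL Dmax ψI ψT hψI hψT hgt
end
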